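/- Let H be a 3-uniform hypergraph in which every pair of vertices among some 4 vertices w,x,y,z has positive co-degree, and suppose the link graph of a vertex f (not in {w,x,y,z}) restricted to {w,x,y,z} contains K_4 minus an edge, with the missing edge being xy. If additionally the pair {x,y} has positive co-degree in H, realized by some vertex g distinct from w,x,y,z,f, then H contains a copy of F_2, the 3-graph with vertices {a,b,c,d,e,g} and edges {abe, ace, bce, ade, bde, cdg}. -/
import Mathlib


/-- In a 3-graph `H`, suppose `w,x,y,z,f,g` are distinct vertices,
every pair among `w,x,y,z` has positive co-degree, the link graph of `f`
restricted to `{w,x,y,z}` contains `K_4` minus the edge `xy` (i.e. `fwx, fwy, fwz,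
fxz, fyz` are edges), and the pair `{x,y}` has positive co-degree realized by `g`
(i.e. `xyg` is an edge). Then `H` contains a copy of `F_2`, the 3-graph with
vertices `{a,b,c,d,e,g}` and edges `{abe, ace, bce, ade, bde, cdg}`. -/
theorem stmt_9 (n : ℕ) (H : Finset (Finset (Fin n)))
    (huniform : ∀ e ∈ H, e.card = 3)
    (w x y z f g : Fin n)
    (hdist : ({w, x, y, z, f, g} : Finset (Fin n)).card = 6)
    (hpos : ∀ u v : Fin n, u ∈ ({w, x, y, z} : Finset (Fin n)) →
      v ∈ ({w, x, y, z} : Finset (Fin n)) → u ≠ v → ∃ e ∈ H, u ∈ e ∧ v ∈ e)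
    (h1 : ({f, w, x} : Finset (Fin n)) ∈ H)
    (h2 : ({f, w, y} : Finset (Fin n)) ∈ H)
    (h3 : ({f, w, z} : Finset (Fin n)) ∈ H)
    (h4 : ({f, x, z} : Finset (Fin n)) ∈ H)
    (h5 : ({f, y, z} : Finset (Fin n)) ∈ H)
    (h6 : ({x, y, g} : Finset (Fin n)) ∈ H) :
    ∃ a b c d e g' : Fin n, ({a, b, c, d, e, g'} : Finset (Fin n)).card = 6 ∧
      ({a, b, e} : Finset (Fin n)) ∈ H ∧ ({a, c, e} : Finset (Fin n)) ∈ H ∧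
      ({b, c, e} : Finset (Fin n)) ∈ H ∧ ({a, d, e} : Finset (Fin n)) ∈ H ∧
      ({b, d, e} : Finset (Fin n)) ∈ H ∧ ({c, d, g'} : Finset (Fin n)) ∈ H := by
  refine ⟨w, z, x, y, f, g, ?_, ?_, ?_, ?_, ?_, ?_, h6⟩
  · rw [show ({w, z, x, y, f, g} : Finset (Fin n)) = {w, x, y, z, f, g} from by
      rw [Finset.insert_comm z x, Finset.insert_comm z y]]
    exact hdist
  · rw [show ({w, z, f} : Finset (Fin n)) = {f, w, z} from by ext a; simp; tauto]; exact h3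
  · rw [show ({w, x, f} : Finset (Fin n)) = {f, w, x} from by ext a; simp; tauto]; exact h1
  · rw [show ({z, x, f} : Finset (Fin n)) = {f, x, z} from by ext a; simp; tauto]; exact h4
  · rw [show ({w, y, f} : Finset (Fin n)) = {f, w, y} from by ext a; simp; tauto]; exact h2
  · rw [show ({z, y, f} : Finset (Fin n)) = {f, y, z} from by ext a; simp; tauto]; exact h5
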